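/- arXiv:1707.00241 — 7 statements merged into one kernel-verified Lean document; each statement's English description precedes it below -/
import Mathlib

section
/- Let n be squarefree with prime factorization n = p₁ p₂ ⋯ p_k. Then Pgr(ℤ/n) is isomorphic to the product of symmetric groups S_{p₁} × ⋯ × S_{p_k}. In particular |Pgr(ℤ/n)| = p₁! ⋯ p_k!. -/
def PolyPerms (R : Type*) [CommRing R] : Set (Equiv.Perm R) :=
  {σ | ∃ f : Polynomial R, ∀ x, σ x = f.eval x}

def Pgr (R : Type*) [CommRing R] : Subgroup (Equiv.Perm R) :=
  Subgroup.closure (PolyPerms R)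

/-!
A ring isomorphism conjugates polynomial permutations into polynomial permutations, so by the
Chinese remainder theorem `Pgr (ZMod n) ≅ Pgr (∏ ZMod p)`. On a product of rings a polynomial
acts coordinatewise, through its images in the factors; a polynomial permutation of the product
is therefore a family of permutations of the factors. Conversely, over a finite product of
finite fields every such family is polynomial: each coordinate map is a polynomial by Lagrange
interpolation, and the polynomials over the factors glue coefficientwise. Hence the polynomial
permutations already form the subgroup `∏ S_p`.
-/

open Polynomial Equiv

section RingEquiv

variable {R S : Type*} [CommRing R] [CommRing S]

lemma permCongrHom_image_polyPerms_subset (e : R ≃+* S) :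
    e.toEquiv.permCongrHom '' PolyPerms R ⊆ PolyPerms S := by
  rintro _ ⟨σ, ⟨f, hf⟩, rfl⟩
  refine ⟨f.map (e : R →+* S), fun x => ?_⟩
  have hx : (e : R →+* S) (e.symm x) = x := e.apply_symm_apply x
  rw [permCongrHom_coe, permCongr_apply, hf]
  conv_rhs => rw [← hx, eval_map_apply]
  rfl

lemma permCongrHom_image_polyPerms (e : R ≃+* S) :
    e.toEquiv.permCongrHom '' PolyPerms R = PolyPerms S := by
  refine (permCongrHom_image_polyPerms_subset e).antisymm fun τ hτ => ?_
  refine ⟨e.symm.toEquiv.permCongrHom τ, permCongrHom_image_polyPerms_subset e.symm ⟨τ, hτ, rfl⟩,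
    ?_⟩
  ext x
  simp [permCongr_apply]

lemma map_pgr (e : R ≃+* S) :
    (Pgr R).map e.toEquiv.permCongrHom.toMonoidHom = Pgr S := by
  rw [Pgr, Pgr, MonoidHom.map_closure, MulEquiv.coe_toMonoidHom, permCongrHom_image_polyPerms e]

noncomputable def pgrCongr (e : R ≃+* S) : Pgr R ≃* Pgr S :=
  (e.toEquiv.permCongrHom.subgroupMap (Pgr R)).trans (MulEquiv.subgroupCongr (map_pgr e))

end RingEquiv

section PiPerm

variable {ι : Type*} (α : ι → Type*)

def Equiv.Perm.piCongrRightHom : (∀ i, Perm (α i)) →* Perm (∀ i, α i) where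
  toFun := Equiv.piCongrRight
  map_one' := rfl
  map_mul' _ _ := rfl

@[simp]
lemma Equiv.Perm.piCongrRightHom_apply (σ : ∀ i, Perm (α i)) (x : ∀ i, α i) (i : ι) :
    piCongrRightHom α σ x i = σ i (x i) :=
  rfl

variable {α} [∀ i, Nonempty (α i)]

lemma Equiv.Perm.piCongrRightHom_injective : Function.Injective (piCongrRightHom α) := by
  classical
  intro σ τ h
  funext i
  ext a
  let base : ∀ j, α j := fun _ => Classical.arbitrary _
  simpa using congr_fun (DFunLike.congr_fun h (Function.update base i a)) i

lemma Equiv.Perm.mem_range_piCongrRightHom {σ : Perm (∀ i, α i)} (g : ∀ i, α i → α i)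
    (hσ : ∀ x i, σ x i = g i (x i)) : σ ∈ (piCongrRightHom α).range := by
  classical
  let base : ∀ i, α i := fun _ => Classical.arbitrary _
  have hbij : ∀ i, Function.Bijective (g i) := fun i => by
    refine ⟨fun a b hab => ?_, fun b => ?_⟩
    · have hupd : σ (Function.update base i a) = σ (Function.update base i b) := by
        funext j
        rcases eq_or_ne j i with rfl | hji
        · simpa [hσ] using hab
        · simp [hσ, Function.update_of_ne hji]
      simpa using congr_fun (σ.injective hupd) i
    · refine ⟨σ.symm (Function.update base i b) i, ?_⟩
      rw [← hσ, apply_symm_apply, Function.update_self]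
  exact ⟨fun i => ofBijective (g i) (hbij i), Equiv.ext fun x => funext fun i => (hσ x i).symm⟩

end PiPerm

section PiRing

open Perm

variable {ι : Type*}

lemma eval_pi_apply {R : ι → Type*} [∀ i, CommRing (R i)] (f : (∀ i, R i)[X]) (x : ∀ i, R i)
    (i : ι) : f.eval x i = (f.map (Pi.evalRingHom R i)).eval (x i) :=
  (eval_map_apply (Pi.evalRingHom R i) x).symm

lemma polyPerms_pi_subset_range (R : ι → Type*) [∀ i, CommRing (R i)] :
    PolyPerms (∀ i, R i) ⊆ (piCongrRightHom R).range := by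
  rintro σ ⟨f, hf⟩
  exact mem_range_piCongrRightHom (fun i => (f.map (Pi.evalRingHom R i)).eval) fun x i => by
    rw [hf, eval_pi_apply]

lemma range_subset_polyPerms_pi [Finite ι] (F : ι → Type*) [∀ i, Field (F i)] [∀ i, Finite (F i)] :
    ((piCongrRightHom F).range : Set (Perm (∀ i, F i))) ⊆ PolyPerms (∀ i, F i) := by
  rintro _ ⟨σ, rfl⟩
  choose f hf using fun i => (exists_eval_eq_iff (id : F i → F i) (σ i)).2 fun _ _ => congr_arg _
  obtain ⟨p, hp⟩ := (piEquiv F).surjective f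
  refine ⟨p, fun x => funext fun i => ?_⟩
  have hpi : p.map (Pi.evalRingHom F i) = f i := congr_fun hp i
  rw [eval_pi_apply, hpi]
  exact (hf i (x i)).symm

lemma pgr_pi [Finite ι] (F : ι → Type*) [∀ i, Field (F i)] [∀ i, Finite (F i)] :
    Pgr (∀ i, F i) = (piCongrRightHom F).range := by
  rw [Pgr, (polyPerms_pi_subset_range F).antisymm (range_subset_polyPerms_pi F),
    Subgroup.closure_eq]

noncomputable def pgrPiEquiv [Finite ι] (F : ι → Type*) [∀ i, Field (F i)] [∀ i, Finite (F i)] :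
    Pgr (∀ i, F i) ≃* ∀ i, Perm (F i) :=
  (MulEquiv.subgroupCongr (pgr_pi F)).trans (MonoidHom.ofInjective piCongrRightHom_injective).symm

end PiRing

noncomputable def ZMod.equivPiOfSquarefree {n : ℕ} (hn : Squarefree n) :
    ZMod n ≃+* ∀ p : n.primeFactors, ZMod p :=
  (ZMod.ringEquivCongr ((n.primeFactors.prod_coe_sort id).trans
    (Nat.prod_primeFactors_of_squarefree hn)).symm).trans
    (ZMod.prodEquivPi _ fun p q hpq => (Nat.coprime_primes (Nat.prime_of_mem_primeFactors p.2)
      (Nat.prime_of_mem_primeFactors q.2)).2 (Subtype.coe_ne_coe.2 hpq))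

/-- For squarefree `n`, `Pgr (ℤ/n)` is the product of the symmetric groups on its prime factors. -/
theorem stmt5 (n : ℕ) (hn : Squarefree n) :
    Nonempty (Pgr (ZMod n) ≃* ∀ q : n.primeFactors, Equiv.Perm (ZMod (q : ℕ))) ∧
    Nat.card (Pgr (ZMod n)) = ∏ q ∈ n.primeFactors, Nat.factorial q := by
  have : ∀ p : n.primeFactors, Fact (p : ℕ).Prime := fun p => ⟨Nat.prime_of_mem_primeFactors p.2⟩
  let E := (pgrCongr (ZMod.equivPiOfSquarefree hn)).trans (pgrPiEquiv _)
  refine ⟨⟨E⟩, ?_⟩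
  calc Nat.card (Pgr (ZMod n))
      = ∏ p : n.primeFactors, Nat.card (Perm (ZMod (p : ℕ))) := by
        rw [Nat.card_congr E.toEquiv, Nat.card_pi]
    _ = ∏ p ∈ n.primeFactors, p.factorial := by
        simp_rw [Nat.card_perm, Nat.card_zmod]
        exact n.primeFactors.prod_coe_sort Nat.factorial
end

section
/- If n > 6 is squarefree and not prime, then Pgr(ℤ/n) is a proper subgroup of the symmetric group on ℤ/n. -/
/-!
A ring homomorphism `φ : R →+* S` partitions `R` into the fibres of `φ`, and a polynomial map
sends each fibre into a fibre, since `φ (f.eval x) = (f.map φ).eval (φ x)`. When `R` is finite,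
the subgroup generated by the polynomial permutations coincides with the submonoid they generate,
so every element of `Pgr R` still maps fibres into fibres. If `φ` has a nonzero kernel element `k`
and `S` is nontrivial, the transposition of `0` and `1` does not: it fixes `k`, which lies in the
fibre of `0`, while sending `0` to `1`. For `R = ℤ/n` with `n` composite take `S = ℤ/p`, `p` the
least prime factor of `n`.
-/

namespace Equiv.Perm

variable {α β : Type*}

def fiberRespecting (π : α → β) : Submonoid (Equiv.Perm α) where
  carrier := {σ | ∀ x y, π x = π y → π (σ x) = π (σ y)}
  one_mem' := fun _ _ h => h
  mul_mem' := fun hσ hτ x y h => hσ _ _ (hτ x y h)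

theorem swap_notMem_fiberRespecting [DecidableEq α] {π : α → β} {x y z : α}
    (hzx : z ≠ x) (hzy : z ≠ y) (hxz : π x = π z) (hyz : π y ≠ π z) :
    swap x y ∉ fiberRespecting π := fun h => by
  have := h x z hxz
  rw [swap_apply_left, swap_apply_of_ne_of_ne hzx hzy] at this
  exact hyz this

end Equiv.Perm

open Equiv.Perm

theorem polyPerms_subset_fiberRespecting {R S : Type*} [CommRing R] [CommRing S]
    (φ : R →+* S) : PolyPerms R ⊆ fiberRespecting φ := by
  rintro σ ⟨f, hf⟩ x y h
  rw [hf, hf, ← Polynomial.eval₂_at_apply, ← Polynomial.eval₂_at_apply, h]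

theorem Pgr_le_fiberRespecting {R S : Type*} [CommRing R] [CommRing S] [Finite R]
    (φ : R →+* S) : (Pgr R).toSubmonoid ≤ fiberRespecting φ := by
  rw [Pgr, Subgroup.closure_toSubmonoid_of_finite]
  exact Submonoid.closure_le.mpr (polyPerms_subset_fiberRespecting φ)

theorem Pgr_lt_top_of_not_injective {R S : Type*} [CommRing R] [CommRing S] [Finite R]
    [Nontrivial S] (φ : R →+* S) (hφ : ¬ Function.Injective φ) : Pgr R < ⊤ := by
  classical
  obtain ⟨k, hk, hk0⟩ : ∃ k, φ k = 0 ∧ k ≠ 0 := by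
    simpa [injective_iff_map_eq_zero] using hφ
  have hk1 : k ≠ 1 := by rintro rfl; simp at hk
  have hswap : Equiv.swap (0 : R) 1 ∉ fiberRespecting φ :=
    swap_notMem_fiberRespecting hk0 hk1 (by rw [hk, map_zero]) (by simp [hk])
  exact lt_top_iff_ne_top.mpr fun htop =>
    hswap (Pgr_le_fiberRespecting φ (htop ▸ Subgroup.mem_top _))

theorem stmt6_general (n : ℕ) (h6 : 6 < n) (hnp : ¬ n.Prime) :
    Pgr (ZMod n) < ⊤ := by
  have : NeZero n := ⟨by omega⟩
  have : Fact (1 < n.minFac) := ⟨(Nat.minFac_prime (by omega)).one_lt⟩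
  have hlt : n.minFac < n := (Nat.not_prime_iff_minFac_lt (by omega)).mp hnp
  refine Pgr_lt_top_of_not_injective (ZMod.castHom n.minFac_dvd (ZMod n.minFac)) fun hinj => ?_
  have := Nat.card_le_card_of_injective _ hinj
  simp only [Nat.card_zmod] at this
  omega

/-- For squarefree non-prime `n > 6`, `Pgr (ℤ/n)` is a proper subgroup of the symmetric group. -/
theorem stmt6 (n : ℕ) (h6 : 6 < n) (hsf : Squarefree n) (hnp : ¬ n.Prime) :
    Pgr (ZMod n) < ⊤ :=
  stmt6_general n h6 hnp
end

section
/- The polypermutation group of ℤ/4 has order 8 and is isomorphic to the dihedral group D₄ of order 8, generated by the permutations induced by x + 1 (the 4-cycle (0,1,2,3)) and by x⁴ + x² + x (the transposition (1,3)). -/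
/-!
If `f` is a polynomial over `ℤ/4`, then `2 = (x + 2) - x` divides `f(x + 2) - f(x)`; when `f`
induces a permutation this difference is also nonzero, so it equals `2`. Hence every polynomial
permutation commutes with `x ↦ x + 2`, which forces it to be `x ↦ x + c` or `x ↦ c - x`. These
eight maps are the image of the faithful action of `D₄` on `ℤ/4`, and they are generated by the
two polynomial permutations `x + 1` and `x⁴ + x² + x`.
-/

open Polynomial

namespace DihedralGroup

/-- The sign in `sr i ↦ (x ↦ -i - x)` matches Mathlib's convention `sr i * r j = sr (i + j)`. -/
def toPermZMod (n : ℕ) : DihedralGroup n →* Equiv.Perm (ZMod n) where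
  toFun
    | r i => Equiv.addRight i
    | sr i => Equiv.subLeft (-i)
  map_one' := Equiv.ext add_zero
  map_mul' := by
    rintro (i | i) (j | j) <;> ext x <;> simp [r_mul_r, r_mul_sr, sr_mul_r, sr_mul_sr] <;> ring

variable {n : ℕ}

@[simp] lemma toPermZMod_r (i : ZMod n) : toPermZMod n (r i) = Equiv.addRight i := rfl

@[simp] lemma toPermZMod_sr (i : ZMod n) : toPermZMod n (sr i) = Equiv.subLeft (-i) := rfl

lemma toPermZMod_injective (h2 : (2 : ZMod n) ≠ 0) : Function.Injective (toPermZMod n) := by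
  rw [injective_iff_map_eq_one]
  rintro (i | i) h
  · have h0 := Equiv.ext_iff.mp h 0
    simp only [toPermZMod_r, Equiv.coe_addRight, zero_add, Equiv.Perm.one_apply] at h0
    rw [h0, r_zero]
  · have h0 := Equiv.ext_iff.mp h 0
    have h1 := Equiv.ext_iff.mp h 1
    simp only [toPermZMod_sr, Equiv.subLeft_apply, sub_zero, Equiv.Perm.one_apply] at h0 h1
    rw [neg_eq_zero.mp h0] at h1
    exact absurd (by linear_combination -h1) h2

lemma closure_r_one_sr_zero :
    Subgroup.closure {r 1, sr 0} = (⊤ : Subgroup (DihedralGroup n)) := by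
  set K := Subgroup.closure {(r 1 : DihedralGroup n), sr 0}
  have hr : r 1 ∈ K := Subgroup.subset_closure (by simp)
  have hsr : sr 0 ∈ K := Subgroup.subset_closure (by simp)
  rw [Subgroup.eq_top_iff']
  rintro (i | i)
  · rw [← ZMod.intCast_zmod_cast i, ← r_one_zpow]
    exact zpow_mem hr _
  · rw [← zero_add i, ← sr_mul_r, ← ZMod.intCast_zmod_cast i, ← r_one_zpow]
    exact mul_mem hsr (zpow_mem hr _)

lemma range_toPermZMod :
    (toPermZMod n).range = Subgroup.closure {Equiv.addRight 1, Equiv.neg (ZMod n)} := by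
  rw [MonoidHom.range_eq_map, ← closure_r_one_sr_zero, MonoidHom.map_closure, Set.image_pair]
  congr
  ext x
  simp

end DihedralGroup

open DihedralGroup

lemma addRight_one_eq_eval_X_add_one :
    ∀ x : ZMod 4, Equiv.addRight (1 : ZMod 4) x = (X + 1 : (ZMod 4)[X]).eval x := by
  simp

lemma swap_one_three_eq_eval_X_pow_four_add_X_sq_add_X :
    ∀ x : ZMod 4, Equiv.swap (1 : ZMod 4) 3 x = (X ^ 4 + X ^ 2 + X : (ZMod 4)[X]).eval x := by
  simp only [eval_add, eval_pow, eval_X]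
  decide

lemma swap_one_three_eq_neg : Equiv.swap (1 : ZMod 4) 3 = Equiv.neg (ZMod 4) := by
  decide

lemma PolyPerms.map_add_two {σ : Equiv.Perm (ZMod 4)} (hσ : σ ∈ PolyPerms (ZMod 4))
    (x : ZMod 4) : σ (x + 2) = σ x + 2 := by
  obtain ⟨f, hf⟩ := hσ
  obtain ⟨k, hk⟩ : 2 ∣ σ (x + 2) - σ x := by
    simpa only [hf, add_sub_cancel_left] using sub_dvd_eval_sub (x + 2) x f
  have hne : 2 * k ≠ 0 := by
    rw [← hk, sub_ne_zero]
    exact σ.injective.ne (by simp [show (2 : ZMod 4) ≠ 0 by decide])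
  have two_mul_eq_two : ∀ k : ZMod 4, 2 * k ≠ 0 → 2 * k = 2 := by decide
  linear_combination hk + two_mul_eq_two k hne

lemma mem_range_toPermZMod_of_map_add_two {σ : Equiv.Perm (ZMod 4)}
    (hσ : ∀ x, σ (x + 2) = σ x + 2) : σ ∈ (toPermZMod 4).range := by
  have h2 : σ 2 = σ 0 + 2 := by simpa using hσ 0
  have h3 : σ 3 = σ 1 + 2 := hσ 1
  have h1 : σ 1 = σ 0 + 1 ∨ σ 1 = σ 0 - 1 := by
    have eq_add_one_or_eq_sub_one :
        ∀ a b : ZMod 4, b ≠ a → b ≠ a + 2 → b = a + 1 ∨ b = a - 1 := by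
      decide
    refine eq_add_one_or_eq_sub_one _ _ (σ.injective.ne (by decide)) ?_
    rw [← h2]
    exact σ.injective.ne (by decide)
  have elems : ∀ x : ZMod 4, x = 0 ∨ x = 1 ∨ x = 2 ∨ x = 3 := by decide
  rcases h1 with h1 | h1
  · refine ⟨r (σ 0), Equiv.ext fun x => ?_⟩
    obtain rfl | rfl | rfl | rfl := elems x <;>
      simp only [toPermZMod_r, Equiv.coe_addRight, h1, h2, h3] <;> ring
  · refine ⟨sr (-σ 0), Equiv.ext fun x => ?_⟩
    obtain rfl | rfl | rfl | rfl := elems x <;>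
      simp only [toPermZMod_sr, Equiv.subLeft_apply, h1, h2, h3] <;>
      ring_nf <;> reduce_mod_char

lemma range_toPermZMod_four :
    (toPermZMod 4).range = Subgroup.closure {Equiv.addRight 1, Equiv.swap (1 : ZMod 4) 3} := by
  rw [range_toPermZMod, swap_one_three_eq_neg]

lemma Pgr_zmod_four_eq_range_toPermZMod : Pgr (ZMod 4) = (toPermZMod 4).range := by
  apply le_antisymm
  · refine (Subgroup.closure_le _).mpr fun σ hσ => ?_
    exact mem_range_toPermZMod_of_map_add_two (PolyPerms.map_add_two hσ)
  · rw [range_toPermZMod_four, Subgroup.closure_le]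
    rintro σ (rfl | rfl)
    · exact Subgroup.subset_closure ⟨_, addRight_one_eq_eval_X_add_one⟩
    · exact Subgroup.subset_closure ⟨_, swap_one_three_eq_eval_X_pow_four_add_X_sq_add_X⟩

/-- `Pgr (ℤ/4)` has order 8, is dihedral of order 8, and is generated by the permutation
`(0,1,2,3)` induced by `x + 1` and the transposition `(1,3)` induced by `x⁴ + x² + x`. -/
theorem stmt7 :
    Nat.card (Pgr (ZMod 4)) = 8 ∧
    Nonempty (Pgr (ZMod 4) ≃* DihedralGroup 4) ∧
    (∀ x : ZMod 4, Equiv.addRight (1 : ZMod 4) x =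
      (Polynomial.X + 1 : Polynomial (ZMod 4)).eval x) ∧
    (∀ x : ZMod 4, Equiv.swap (1 : ZMod 4) 3 x =
      (Polynomial.X ^ 4 + Polynomial.X ^ 2 + Polynomial.X : Polynomial (ZMod 4)).eval x) ∧
    Pgr (ZMod 4) = Subgroup.closure {Equiv.addRight (1 : ZMod 4), Equiv.swap 1 3} := by
  let e : Pgr (ZMod 4) ≃* DihedralGroup 4 :=
    (MulEquiv.subgroupCongr Pgr_zmod_four_eq_range_toPermZMod).trans
      (MonoidHom.ofInjective (toPermZMod_injective (by decide))).symm
  exact ⟨by rw [Nat.card_congr e.toEquiv, nat_card], ⟨e⟩, addRight_one_eq_eval_X_add_one,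
    swap_one_three_eq_eval_X_pow_four_add_X_sq_add_X,
    Pgr_zmod_four_eq_range_toPermZMod.trans range_toPermZMod_four⟩
end

section
/- Let p be prime, k ≥ 2, and let f ∈ (ℤ/p^k)[x]. If f induces a permutation of ℤ/p^k, then the values f(0), …, f(p−1) are pairwise distinct modulo p and the derivative values f'(0), …, f'(p−1) are units in ℤ/p^k. -/
/-!
Reducing modulo `p` commutes with evaluation, so `f mod p` induces a surjective, hence bijective,
self-map of the finite field `ℤ/p`; this separates `f(0), …, f(p-1)` modulo `p`.
For the derivatives: if `f'(x)` is not a unit it is divisible by `p`, so `m = p^(k-1)` satisfies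
`f'(x) m = 0` and `m² = 0`; the Taylor expansion then gives `f(x + m) = f(x)` with `m ≠ 0`,
contradicting injectivity.
-/

open Polynomial

namespace Polynomial

theorem surjective_eval_map {R S : Type*} [Semiring R] [Semiring S] {φ : R →+* S}
    (hφ : Function.Surjective φ) {f : R[X]} (hf : Function.Surjective fun x => f.eval x) :
    Function.Surjective fun y => (f.map φ).eval y := by
  intro z
  obtain ⟨r, rfl⟩ := hφ z
  obtain ⟨x, rfl⟩ := hf r
  exact ⟨φ x, eval_map_apply φ x⟩

theorem eval_add_of_derivative_mul_eq_zero {R : Type*} [CommRing R] (f : R[X]) {x m : R}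
    (hfm : f.derivative.eval x * m = 0) (hm : m ^ 2 = 0) : f.eval (x + m) = f.eval x := by
  obtain ⟨c, hc⟩ := f.binomExpansion x m
  rw [hc, hfm, hm, mul_zero, add_zero, add_zero]

theorem derivative_eval_mul_ne_zero_of_injective {R : Type*} [CommRing R] {f : R[X]}
    (hf : Function.Injective fun x => f.eval x) (x : R) {m : R} (hm : m ^ 2 = 0) (hm0 : m ≠ 0) :
    f.derivative.eval x * m ≠ 0 := fun hfm =>
  hm0 (add_eq_left.mp (hf (f.eval_add_of_derivative_mul_eq_zero hfm hm)))

end Polynomial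

namespace ZMod

variable {p k : ℕ}

theorem natCast_pow_pred_ne_zero (hp : p.Prime) (hk : k ≠ 0) :
    ((p ^ (k - 1) : ℕ) : ZMod (p ^ k)) ≠ 0 := by
  rw [Ne, natCast_eq_zero_iff, Nat.pow_dvd_pow_iff_le_right hp.one_lt]
  omega

theorem natCast_pow_pred_sq (hk : 2 ≤ k) : ((p ^ (k - 1) : ℕ) : ZMod (p ^ k)) ^ 2 = 0 := by
  rw [← Nat.cast_pow, natCast_eq_zero_iff, ← pow_mul]
  exact pow_dvd_pow p (by omega)

theorem isUnit_of_mul_natCast_pow_pred_ne_zero (hp : p.Prime) (hk : k ≠ 0) {a : ZMod (p ^ k)}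
    (ha : a * ((p ^ (k - 1) : ℕ) : ZMod (p ^ k)) ≠ 0) : IsUnit a := by
  contrapose! ha
  have : NeZero (p ^ k) := ⟨pow_ne_zero k hp.ne_zero⟩
  rw [← natCast_zmod_val a, isUnit_iff_coprime, Nat.coprime_pow_right_iff (Nat.pos_of_ne_zero hk),
    Nat.coprime_comm, hp.coprime_iff_not_dvd, not_not] at ha
  obtain ⟨c, hc⟩ := ha
  rw [← natCast_zmod_val a, hc, ← Nat.cast_mul, natCast_eq_zero_iff, mul_right_comm, ← pow_succ',
    Nat.sub_add_cancel (Nat.pos_of_ne_zero hk)]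
  exact dvd_mul_right (p ^ k) c

end ZMod

/-- If `f` induces a permutation of `ℤ/p^k` (`k ≥ 2`), then `f(0), …, f(p-1)` are pairwise
distinct modulo `p` and `f'(0), …, f'(p-1)` are units in `ℤ/p^k`. -/
theorem stmt13 (p k : ℕ) (hp : p.Prime) (hk : 2 ≤ k)
    (f : Polynomial (ZMod (p ^ k)))
    (hf : Function.Bijective fun x => f.eval x) :
    (∀ i j : Fin p,
      ZMod.castHom (dvd_pow_self p (by omega : k ≠ 0)) (ZMod p) (f.eval ((i : ℕ) : ZMod (p ^ k))) =
        ZMod.castHom (dvd_pow_self p (by omega : k ≠ 0)) (ZMod p)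
          (f.eval ((j : ℕ) : ZMod (p ^ k))) → i = j) ∧
    (∀ i : Fin p, IsUnit (f.derivative.eval ((i : ℕ) : ZMod (p ^ k)))) := by
  have : Fact p.Prime := ⟨hp⟩
  set φ := ZMod.castHom (dvd_pow_self p (by omega : k ≠ 0)) (ZMod p)
  have hφ : Function.Surjective φ := ZMod.castHom_surjective _
  have hinj : Function.Injective fun y => (f.map φ).eval y :=
    Finite.injective_iff_surjective.mpr (surjective_eval_map hφ hf.2)
  refine ⟨fun i j hij => ?_, fun i => ?_⟩
  · rw [← eval_map_apply, ← eval_map_apply, map_natCast, map_natCast] at hij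
    have hij' := (ZMod.natCast_eq_natCast_iff' _ _ p).mp (hinj hij)
    exact Fin.ext (by rwa [Nat.mod_eq_of_lt i.2, Nat.mod_eq_of_lt j.2] at hij')
  · exact ZMod.isUnit_of_mul_natCast_pow_pred_ne_zero hp (by omega)
      (derivative_eval_mul_ne_zero_of_injective hf.1 _ (ZMod.natCast_pow_pred_sq hk)
        (ZMod.natCast_pow_pred_ne_zero hp (by omega)))
end

section
/- Let p be a prime and k ≥ 2 an integer with p ≥ k. Then the number of permutations of ℤ/p^k induced by polynomials in (ℤ/p^k)[x] equals p! · [(p−1) · p^{(k²+k−4)/2}]^p. -/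
/-!
On the residue class of `r`, a polynomial `P` over `ℤ/p^k` is `r + t ↦ ∑_{i<k} bᵢ tⁱ`, where the
`bᵢ` are its Taylor coefficients at `r` (`t ∈ pℤ/p^k`, so `tᵏ = 0`), and only `bᵢ mod p^(k-i)`
matters. Conversely every family of such local data comes from a polynomial: glue the classes
with the idempotents `(∏_{s ≠ r} (X - s))^N`. Since `k ≤ p`, the nodes `t = 0, p, …, (k-1)p`
show by a Vandermonde argument that different data give different functions. By Hensel's
criterion `P` is a permutation iff `b₀ = P(r)` is injective modulo `p` and `b₁ = P'(r)` is a
unit, leaving `p! · p^((k-1)p)` choices for the `b₀`, `(p^(k-2)(p-1))^p` for the `b₁`, and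
`p^(k-i)` for each remaining `bᵢ`.
-/

open Finset Polynomial

theorem AddMonoidHom.card_fiber_mul_card_of_surjective {G H : Type*} [AddGroup G] [AddGroup H]
    {f : G →+ H} (hf : Function.Surjective f) (h : H) :
    Nat.card (f ⁻¹' {h}) * Nat.card H = Nat.card G := by
  rw [Nat.card_congr (f.fiberEquivKerOfSurjective hf h), ← f.ker.card_mul_index,
    AddSubgroup.index_ker f, f.range_eq_top.mpr hf, AddSubgroup.card_top]

theorem Nat.card_injective_comp {ι α β : Type*} [Fintype ι] [Fintype β] [Finite α]
    (π : α → β) {m : ℕ} (hπ : ∀ b, Nat.card (π ⁻¹' {b}) = m) :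
    Nat.card {c : ι → α // Function.Injective fun i => π (c i)} =
      Nat.card (ι ↪ β) * m ^ Fintype.card ι := by
  classical
  let reduce : {c : ι → α // Function.Injective fun i => π (c i)} → (ι ↪ β) := fun c =>
    ⟨fun i => π (c.1 i), c.2⟩
  have fiber (e : ι ↪ β) : {c // reduce c = e} ≃ ((i : ι) → π ⁻¹' {e i}) :=
    { toFun := fun c i => ⟨c.1.1 i, DFunLike.congr_fun c.2 i⟩
      invFun := fun s => ⟨⟨fun i => s i, by
          convert e.injective using 1; funext i; exact (s i).2⟩,
        DFunLike.ext _ _ fun i => (s i).2⟩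
      left_inv := fun _ => rfl
      right_inv := fun _ => rfl }
  rw [← Nat.card_congr (Equiv.sigmaFiberEquiv reduce), Nat.card_sigma]
  simp [Nat.card_congr (fiber _), Nat.card_pi, hπ, Nat.card_eq_fintype_card]

theorem Finset.sum_range_tsub_mul_two (n : ℕ) : (∑ j ∈ range n, (n - j)) * 2 = n * (n + 1) := by
  induction n with
  | zero => rfl
  | succ n ih =>
    rw [sum_range_succ', add_mul]
    simp only [Nat.add_sub_add_right, Nat.sub_zero, ih]
    ring

theorem Matrix.eq_zero_of_forall_index_sum_pow_mul_eq_zero_of_isUnit_sub {R : Type*} [CommRing R]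
    {n : ℕ} {f v : Fin n → R} (hf : Pairwise fun i j => IsUnit (f i - f j))
    (hfv : ∀ j, ∑ i : Fin n, f j ^ (i : ℕ) * v i = 0) : v = 0 := by
  have hdet : IsUnit (vandermonde f).det := by
    rw [det_vandermonde, IsUnit.prod_iff]
    exact fun i _ => IsUnit.prod_iff.mpr fun j hj => hf (mem_Ioi.mp hj).ne'
  exact eq_zero_of_det_mem_nonZeroDivisors_of_mulVec_eq_zero hdet.mem_nonZeroDivisors
    (_root_.funext hfv)

theorem Polynomial.eval_add_eq_sum_taylor_of_pow_eq_zero {R : Type*} [CommRing R] (P : R[X])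
    (a : R) {t : R} {k : ℕ} (ht : t ^ k = 0) :
    P.eval (a + t) = ∑ i ∈ range k, (taylor a P).coeff i * t ^ i := by
  rw [add_comm, ← taylor_eval,
    eval_eq_sum_range' ((Nat.lt_succ_self _).trans_le (le_max_left _ k))]
  refine (sum_subset (range_subset_range.mpr (le_max_right _ _)) fun i _ hi => ?_).symm
  rw [pow_eq_zero_of_le (not_lt.mp (mem_range.not.mp hi)) ht, mul_zero]

theorem Polynomial.eq_of_eval_eq_of_isUnit_derivative {R : Type*} [CommRing R] (P : R[X])
    {x y : R} (hxy : IsNilpotent (y - x)) (hP : IsUnit (P.derivative.eval x))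
    (h : P.eval x = P.eval y) : x = y := by
  obtain ⟨K, hK⟩ := P.binomExpansion x (y - x)
  rw [add_sub_cancel, ← h] at hK
  have hu : IsUnit (P.derivative.eval x + K * (y - x)) :=
    ((Commute.all K _).isNilpotent_mul_left hxy).isUnit_add_left_of_commute hP (Commute.all _ _)
  have h0 : (y - x) * (P.derivative.eval x + K * (y - x)) = 0 := by linear_combination -hK
  exact (sub_eq_zero.mp (hu.mul_left_eq_zero.mp h0)).symm

namespace ZMod

variable {p k : ℕ}

theorem natCast_pow_self_eq_zero : (p : ZMod (p ^ k)) ^ k = 0 := by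
  exact_mod_cast natCast_self (p ^ k)

theorem natCast_pow_ne_zero_of_lt (hp : 1 < p) {i : ℕ} (hi : i < k) :
    (p : ZMod (p ^ k)) ^ i ≠ 0 := by
  rw [← Nat.cast_pow, Ne, natCast_eq_zero_iff, Nat.pow_dvd_pow_iff_le_right hp]
  omega

theorem pow_mul_natCast_eq_iff [NeZero p] {i l : ℕ} (hil : i + l = k) {a b : ℕ} :
    (p : ZMod (p ^ k)) ^ i * a = p ^ i * b ↔ a ≡ b [MOD p ^ l] := by
  rw [← Nat.cast_pow, ← Nat.cast_mul, ← Nat.cast_mul, natCast_eq_natCast_iff, ← hil, pow_add,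
    Nat.ModEq.mul_left_cancel_iff' (pow_ne_zero _ (NeZero.ne p))]

theorem pow_mul_val_injective [NeZero p] {i l : ℕ} (hil : i + l = k) {z w : ZMod (p ^ l)}
    (h : (p : ZMod (p ^ k)) ^ i * z.val = p ^ i * w.val) : z = w :=
  val_injective _ (((pow_mul_natCast_eq_iff hil).mp h).eq_of_lt_of_lt z.val_lt w.val_lt)

theorem pow_mul_val_cast [NeZero p] {i l : ℕ} (hil : i + l = k) (y : ZMod (p ^ k)) :
    (p : ZMod (p ^ k)) ^ i * (cast y : ZMod (p ^ l)).val = p ^ i * y := by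
  conv_rhs => rw [← natCast_zmod_val y]
  rw [pow_mul_natCast_eq_iff hil, cast_eq_val, val_natCast]
  exact Nat.mod_modEq _ _

theorem cast_natCast_val [NeZero p] (hk : k ≠ 0) (r : ZMod p) :
    (cast (r.val : ZMod (p ^ k)) : ZMod p) = r := by
  rw [cast_natCast (dvd_pow_self p hk), natCast_zmod_val]

theorem cast_sub_natCast_val_cast [NeZero p] (hk : k ≠ 0) (x : ZMod (p ^ k)) :
    (cast (x - ((cast x : ZMod p).val : ZMod (p ^ k))) : ZMod p) = 0 := by
  rw [cast_sub (dvd_pow_self p hk), cast_natCast_val hk, sub_self]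

theorem exists_eq_natCast_mul_of_cast_eq_zero [NeZero p] {y : ZMod (p ^ k)}
    (h : (cast y : ZMod p) = 0) : ∃ m : ZMod (p ^ k), y = p * m := by
  rw [cast_eq_val, natCast_eq_zero_iff] at h
  obtain ⟨m, hm⟩ := h
  exact ⟨m, by rw [← natCast_zmod_val y, hm, Nat.cast_mul]⟩

theorem pow_eq_zero_of_cast_eq_zero [NeZero p] {y : ZMod (p ^ k)} (h : (cast y : ZMod p) = 0) :
    y ^ k = 0 := by
  obtain ⟨m, rfl⟩ := exists_eq_natCast_mul_of_cast_eq_zero h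
  rw [mul_pow, natCast_pow_self_eq_zero, zero_mul]

theorem isUnit_iff_cast_ne_zero [Fact p.Prime] (hk : k ≠ 0) (x : ZMod (p ^ k)) :
    IsUnit x ↔ (cast x : ZMod p) ≠ 0 := by
  rw [← natCast_zmod_val x, isUnit_iff_coprime, Nat.coprime_pow_right_iff (Nat.pos_of_ne_zero hk),
    cast_natCast (dvd_pow_self p hk), Ne, natCast_eq_zero_iff, Nat.coprime_comm,
    (Fact.out : p.Prime).coprime_iff_not_dvd]

theorem cast_eq_cast_of_natCast_mul_eq [NeZero p] (hk : 2 ≤ k) {a b : ZMod (p ^ k)}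
    (h : (p : ZMod (p ^ k)) * a = p * b) : (cast a : ZMod p) = cast b := by
  rw [← natCast_zmod_val a, ← natCast_zmod_val b, ← pow_one (p : ZMod (p ^ k)),
    pow_mul_natCast_eq_iff (l := k - 1) (by omega)] at h
  rw [cast_eq_val, cast_eq_val, natCast_eq_natCast_iff]
  exact Nat.ModEq.of_dvd (dvd_pow_self p (by omega)) h

theorem cast_eval_eq_of_cast_eq (hk : k ≠ 0) (P : (ZMod (p ^ k))[X]) {x y : ZMod (p ^ k)}
    (h : (cast x : ZMod p) = cast y) : (cast (P.eval x) : ZMod p) = cast (P.eval y) := by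
  let φ := castHom (dvd_pow_self p hk) (ZMod p)
  change φ x = φ y at h
  change φ (P.eval x) = φ (P.eval y)
  rw [← eval₂_hom, h, eval₂_hom]

theorem card_cast_preimage_singleton [NeZero p] (hk : k ≠ 0) (s : ZMod p) :
    Nat.card ((cast : ZMod (p ^ k) → ZMod p) ⁻¹' {s}) = p ^ (k - 1) := by
  have h := (castHom (dvd_pow_self p hk) (ZMod p)).toAddMonoidHom.card_fiber_mul_card_of_surjective
    (castHom_surjective (dvd_pow_self p hk)) s
  rw [Nat.card_zmod, Nat.card_zmod] at h
  refine Nat.eq_of_mul_eq_mul_right (NeZero.pos p) (h.trans ?_)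
  rw [← pow_succ, Nat.sub_add_cancel (Nat.pos_of_ne_zero hk)]

end ZMod

namespace PolyPerms

open ZMod

variable {p k : ℕ}

/-- Carlitz's form `f(r + mp) = ∑ (mp)ⁱ fᵢ(r)`, with `r` the least residue of `x` and
`fᵢ = B · i`. -/
def residueExpansion (B : ZMod p → ℕ → ZMod (p ^ k)) (x : ZMod (p ^ k)) : ZMod (p ^ k) :=
  ∑ i ∈ range k, B (cast x) i * (x - ((cast x : ZMod p).val : ZMod (p ^ k))) ^ i

theorem eval_eq_residueExpansion_taylor [NeZero p] (hk : k ≠ 0) (P : (ZMod (p ^ k))[X])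
    (x : ZMod (p ^ k)) :
    P.eval x = residueExpansion (fun r i => (taylor (r.val : ZMod (p ^ k)) P).coeff i) x := by
  conv_lhs => rw [← add_sub_cancel ((cast x : ZMod p).val : ZMod (p ^ k)) x]
  exact P.eval_add_eq_sum_taylor_of_pow_eq_zero _
    (pow_eq_zero_of_cast_eq_zero (cast_sub_natCast_val_cast hk x))

theorem residueExpansion_natCast_val_add [NeZero p] (hk : k ≠ 0) (B : ZMod p → ℕ → ZMod (p ^ k))
    (r : ZMod p) (m : ZMod (p ^ k)) :
    residueExpansion B (r.val + p * m) = ∑ i ∈ range k, B r i * (p * m) ^ i := by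
  have hr : (cast ((r.val : ZMod (p ^ k)) + (p : ZMod (p ^ k)) * m) : ZMod p) = r := by
    rw [cast_add (dvd_pow_self p hk), cast_mul (dvd_pow_self p hk), cast_natCast_val hk,
      cast_natCast (dvd_pow_self p hk), CharP.cast_eq_zero, zero_mul, add_zero]
  simp only [residueExpansion, hr, add_sub_cancel_left]

theorem exists_eval_eq_eval_cast [Fact p.Prime] (hk : k ≠ 0) (Q : ZMod p → (ZMod (p ^ k))[X]) :
    ∃ P : (ZMod (p ^ k))[X], ∀ x, P.eval x = (Q (cast x)).eval x := by
  classical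
  let N := Fintype.card (ZMod (p ^ k))ˣ * k
  let E : ZMod p → (ZMod (p ^ k))[X] := fun r =>
    ∏ s ∈ univ.erase r, (X - C (s.val : ZMod (p ^ k))) ^ N
  refine ⟨∑ r, E r * Q r, fun x => ?_⟩
  set r₀ : ZMod p := cast x
  have hE (r : ZMod p) : (E r).eval x = ∏ s ∈ univ.erase r, (x - (s.val : ZMod (p ^ k))) ^ N := by
    simp [E, eval_prod]
  -- on the class of `r₀`, the factors of `E r₀` are units, and `u ^ N = 1` for units
  have hE₀ : (E r₀).eval x = 1 := by
    refine (hE r₀).trans (prod_eq_one fun s hs => ?_)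
    have hne : (cast (x - (s.val : ZMod (p ^ k))) : ZMod p) ≠ 0 := by
      rw [cast_sub (dvd_pow_self p hk), cast_natCast_val hk, sub_ne_zero]
      exact (ne_of_mem_erase hs).symm
    obtain ⟨u, hu⟩ := (isUnit_iff_cast_ne_zero hk _).mpr hne
    rw [← hu, pow_mul, ← Units.val_pow_eq_pow_val, pow_card_eq_one, Units.val_one, one_pow]
  -- for `r ≠ r₀`, the factor `(x - r₀) ^ N` of `E r` vanishes since `N ≥ k`
  have hE_ne (r : ZMod p) (hr : r ≠ r₀) : (E r).eval x = 0 := by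
    rw [hE, ← mul_prod_erase _ _ (mem_erase.mpr ⟨Ne.symm hr, mem_univ r₀⟩),
      pow_eq_zero_of_le (Nat.le_mul_of_pos_left k Fintype.card_pos)
        (pow_eq_zero_of_cast_eq_zero (cast_sub_natCast_val_cast hk x)), zero_mul]
  rw [eval_finsetSum, sum_eq_single r₀ (fun r _ hr => by rw [eval_mul, hE_ne r hr, zero_mul])
    (by simp), eval_mul, hE₀, one_mul]

theorem exists_eval_eq_residueExpansion [Fact p.Prime] (hk : k ≠ 0)
    (B : ZMod p → ℕ → ZMod (p ^ k)) :
    ∃ P : (ZMod (p ^ k))[X], ∀ x, P.eval x = residueExpansion B x := by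
  obtain ⟨P, hP⟩ := exists_eval_eq_eval_cast hk fun r =>
    ∑ i ∈ range k, C (B r i) * (X - C (r.val : ZMod (p ^ k))) ^ i
  exact ⟨P, fun x => by simp [hP, residueExpansion, eval_finsetSum]⟩

theorem residueExpansion_congr [NeZero p] (hk : k ≠ 0) {B B' : ZMod p → ℕ → ZMod (p ^ k)}
    (h : ∀ r, ∀ i < k, (p : ZMod (p ^ k)) ^ i * B r i = p ^ i * B' r i) :
    residueExpansion B = residueExpansion B' := by
  funext x
  obtain ⟨m, hm⟩ := exists_eq_natCast_mul_of_cast_eq_zero (cast_sub_natCast_val_cast hk x)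
  simp only [residueExpansion, hm]
  refine sum_congr rfl fun i hi => ?_
  linear_combination m ^ i * h _ i (mem_range.mp hi)

theorem pow_mul_eq_of_residueExpansion_eq [Fact p.Prime] (hk : k ≠ 0) (hkp : k ≤ p)
    {B B' : ZMod p → ℕ → ZMod (p ^ k)} (h : residueExpansion B = residueExpansion B')
    (r : ZMod p) {i : ℕ} (hi : i < k) : (p : ZMod (p ^ k)) ^ i * B r i = p ^ i * B' r i := by
  -- the nodes `0, …, k - 1` are distinct modulo `p` since `k ≤ p`
  have hnodes : Pairwise fun m m' : Fin k => IsUnit ((m : ZMod (p ^ k)) - m') := by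
    intro m m' hmm'
    rw [isUnit_iff_cast_ne_zero hk, cast_sub (dvd_pow_self p hk),
      cast_natCast (dvd_pow_self p hk), cast_natCast (dvd_pow_self p hk), sub_ne_zero]
    intro heq
    apply hmm'
    have := congrArg ZMod.val heq
    rwa [val_natCast_of_lt (by omega), val_natCast_of_lt (by omega), Fin.val_inj] at this
  have hw := Matrix.eq_zero_of_forall_index_sum_pow_mul_eq_zero_of_isUnit_sub hnodes
    (v := fun i : Fin k => (p : ZMod (p ^ k)) ^ (i : ℕ) * (B r i - B' r i)) fun m => by
      have hm := congrFun h (r.val + p * m)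
      rw [residueExpansion_natCast_val_add hk, residueExpansion_natCast_val_add hk,
        ← Fin.sum_univ_eq_sum_range (fun i => B r i * _),
        ← Fin.sum_univ_eq_sum_range (fun i => B' r i * _), ← sub_eq_zero,
        ← sum_sub_distrib] at hm
      rw [← hm]
      exact sum_congr rfl fun i _ => by ring
  simpa [mul_sub, sub_eq_zero] using congrFun hw ⟨i, hi⟩

theorem eval_add_natCast_pow_eq_of_cast_derivative_eq_zero [NeZero p] (hk : 2 ≤ k)
    (P : (ZMod (p ^ k))[X]) (a : ZMod (p ^ k)) (h : (cast (P.derivative.eval a) : ZMod p) = 0) :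
    P.eval (a + p ^ (k - 1)) = P.eval a := by
  obtain ⟨K, hK⟩ := P.binomExpansion a (p ^ (k - 1))
  obtain ⟨m, hm⟩ := exists_eq_natCast_mul_of_cast_eq_zero h
  have h₁ : (p : ZMod (p ^ k)) * p ^ (k - 1) = 0 := by
    rw [← pow_succ', Nat.sub_add_cancel (by omega), natCast_pow_self_eq_zero]
  have h₂ : ((p : ZMod (p ^ k)) ^ (k - 1)) ^ 2 = 0 := by
    rw [← pow_mul]
    exact pow_eq_zero_of_le (by omega) natCast_pow_self_eq_zero
  rw [hK, hm]
  linear_combination m * h₁ + K * h₂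

/-- Hensel's criterion for permutation polynomials. -/
theorem bijective_eval_iff [Fact p.Prime] (hk : 2 ≤ k) (P : (ZMod (p ^ k))[X]) :
    Function.Bijective (fun x => P.eval x) ↔
      Function.Injective (fun r : ZMod p => (cast (P.eval (r.val : ZMod (p ^ k))) : ZMod p)) ∧
        ∀ r : ZMod p, IsUnit (P.derivative.eval (r.val : ZMod (p ^ k))) := by
  have hk0 : k ≠ 0 := by omega
  have hcongr (Q : (ZMod (p ^ k))[X]) (x : ZMod (p ^ k)) :
      (cast (Q.eval ((cast x : ZMod p).val : ZMod (p ^ k))) : ZMod p) = cast (Q.eval x) :=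
    cast_eval_eq_of_cast_eq hk0 Q (cast_natCast_val hk0 _)
  constructor
  · intro hP
    refine ⟨Finite.injective_iff_surjective.mpr fun s => ?_, fun r => ?_⟩
    · obtain ⟨x, hx⟩ := hP.2 (s.val : ZMod (p ^ k))
      refine ⟨cast x, ?_⟩
      simp only [hcongr]
      rw [show P.eval x = s.val from hx, cast_natCast_val hk0]
    · by_contra hu
      rw [isUnit_iff_cast_ne_zero hk0, not_not] at hu
      have := hP.1 (eval_add_natCast_pow_eq_of_cast_derivative_eq_zero hk P _ hu)
      exact natCast_pow_ne_zero_of_lt (Fact.out : p.Prime).one_lt (by omega : k - 1 < k)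
        (add_eq_left.mp this)
  · rintro ⟨hinj, hunit⟩
    refine Finite.injective_iff_bijective.mp fun x y h => ?_
    have hxy : (cast x : ZMod p) = cast y := hinj (by simp only [hcongr]; exact congrArg _ h)
    refine P.eq_of_eval_eq_of_isUnit_derivative ⟨k, pow_eq_zero_of_cast_eq_zero ?_⟩ ?_ h
    · rw [cast_sub (dvd_pow_self p hk0), hxy, sub_self]
    · rw [isUnit_iff_cast_ne_zero hk0, ← hcongr]
      exact (isUnit_iff_cast_ne_zero hk0 _).mp (hunit _)

/-- The local data `(c, u, a)` of a polynomial permutation: on the class of `r` its Taylor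
coefficients are `b₀ = c r`, `b₁ ≡ u r` modulo `p^(k-1)` and `b_(j+2) ≡ a r j` modulo
`p^(k-2-j)`, which is all of them that `residueExpansion` sees. -/
abbrev Data (p k : ℕ) : Type :=
  {c : ZMod p → ZMod (p ^ k) // Function.Injective fun r => (cast (c r) : ZMod p)} ×
    (ZMod p → (ZMod (p ^ (k - 1)))ˣ) × (ZMod p → (j : Fin (k - 2)) → ZMod (p ^ (k - 2 - j)))

def Data.coeff (d : Data p k) (r : ZMod p) : ℕ → ZMod (p ^ k)
  | 0 => d.1.1 r
  | 1 => (d.2.1 r : ZMod (p ^ (k - 1))).val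
  | j + 2 => if h : j < k - 2 then (d.2.2 r ⟨j, h⟩).val else 0

theorem Data.ext_of_pow_mul_coeff_eq [NeZero p] (hk : 2 ≤ k) {d d' : Data p k}
    (h : ∀ r, ∀ i < k, (p : ZMod (p ^ k)) ^ i * d.coeff r i = p ^ i * d'.coeff r i) :
    d = d' := by
  obtain ⟨⟨c, hc⟩, u, a⟩ := d
  obtain ⟨⟨c', hc'⟩, u', a'⟩ := d'
  have hc : c = c' := funext fun r => by simpa [Data.coeff] using h r 0 (by omega)
  have hu : u = u' := funext fun r => Units.ext <| pow_mul_val_injective (k := k) (i := 1)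
    (by omega) (by simpa [Data.coeff] using h r 1 (by omega))
  have ha : a = a' := funext fun r => funext fun j => pow_mul_val_injective (k := k) (i := j + 2)
    (by omega) (by simpa [Data.coeff, j.isLt] using h r (j + 2) (by omega))
  subst hc hu ha
  rfl

theorem Data.residueExpansion_coeff_injective [Fact p.Prime] (hk : 2 ≤ k) (hkp : k ≤ p) :
    Function.Injective fun d : Data p k => residueExpansion d.coeff := fun _ _ h =>
  Data.ext_of_pow_mul_coeff_eq hk fun r _ hi =>
    pow_mul_eq_of_residueExpansion_eq (by omega) hkp h r hi

theorem Data.bijective_residueExpansion_coeff [Fact p.Prime] (hk : 2 ≤ k) (hkp : k ≤ p)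
    (d : Data p k) : Function.Bijective (residueExpansion d.coeff) := by
  have hk0 : k ≠ 0 := by omega
  obtain ⟨P, hP⟩ := exists_eval_eq_residueExpansion hk0 d.coeff
  have htaylor := pow_mul_eq_of_residueExpansion_eq hk0 hkp
    ((funext fun x => (eval_eq_residueExpansion_taylor hk0 P x).symm).trans (funext hP))
  rw [← funext hP, bijective_eval_iff hk]
  refine ⟨?_, fun r => ?_⟩
  · convert d.1.2 using 3 with r
    simpa only [pow_zero, one_mul, taylor_coeff_zero, Data.coeff] using
      htaylor r (i := 0) (by omega)
  · have h₁ := cast_eq_cast_of_natCast_mul_eq hk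
      (by simpa only [pow_one, taylor_coeff_one, Data.coeff] using htaylor r (i := 1) (by omega))
    rw [isUnit_iff_cast_ne_zero hk0, h₁, cast_natCast (dvd_pow_self p hk0), ← cast_eq_val,
      ← isUnit_iff_cast_ne_zero (by omega : k - 1 ≠ 0)]
    exact (d.2.1 r).isUnit

theorem Data.exists_residueExpansion_coeff_eq [Fact p.Prime] (hk : 2 ≤ k) (P : (ZMod (p ^ k))[X])
    (hP : Function.Bijective fun x => P.eval x) :
    ∃ d : Data p k, residueExpansion d.coeff = fun x => P.eval x := by
  have hk0 : k ≠ 0 := by omega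
  obtain ⟨hinj, hunit⟩ := (bijective_eval_iff hk P).mp hP
  let b (r : ZMod p) (i : ℕ) : ZMod (p ^ k) := (taylor (r.val : ZMod (p ^ k)) P).coeff i
  let d : Data p k := (⟨fun r => b r 0, by simpa [b, taylor_coeff_zero] using hinj⟩,
    fun r => unitsMap (pow_dvd_pow p (Nat.sub_le k 1))
      (by simpa [b, taylor_coeff_one] using hunit r : IsUnit (b r 1)).unit,
    fun r j => cast (b r (j + 2)))
  refine ⟨d, (residueExpansion_congr hk0 fun r i hi => ?_).trans
    (funext fun x => (eval_eq_residueExpansion_taylor hk0 P x).symm)⟩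
  match i, hi with
  | 0, _ => rfl
  | 1, _ => exact pow_mul_val_cast (l := k - 1) (by omega) (b r 1)
  | j + 2, hj =>
    simp only [Data.coeff, dif_pos (show j < k - 2 by omega)]
    exact pow_mul_val_cast (l := k - 2 - j) (by omega) (b r (j + 2))

theorem Data.card [Fact p.Prime] (hk : 2 ≤ k) :
    Nat.card (Data p k) = p.factorial * ((p - 1) * p ^ ((k ^ 2 + k - 4) / 2)) ^ p := by
  have hc : Nat.card {c : ZMod p → ZMod (p ^ k) //
      Function.Injective fun r => (cast (c r) : ZMod p)} = p.factorial * (p ^ (k - 1)) ^ p := by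
    rw [Nat.card_injective_comp _ (card_cast_preimage_singleton (by omega)),
      Nat.card_eq_fintype_card, Fintype.card_embedding_eq, ZMod.card, Nat.descFactorial_self]
  have hu : Nat.card (ZMod (p ^ (k - 1)))ˣ = p ^ (k - 2) * (p - 1) := by
    rw [Nat.card_eq_fintype_card, card_units_eq_totient, Nat.totient_prime_pow Fact.out (by omega),
      Nat.sub_sub]
  have ha : Nat.card ((j : Fin (k - 2)) → ZMod (p ^ (k - 2 - j))) =
      p ^ ∑ j ∈ range (k - 2), (k - 2 - j) := by
    simp [prod_pow_eq_pow_sum, Fin.sum_univ_eq_sum_range (fun j => k - 2 - j)]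
  have hexp : (k ^ 2 + k - 4) / 2 = (k - 1) + (k - 2) + ∑ j ∈ range (k - 2), (k - 2 - j) := by
    obtain ⟨n, rfl⟩ : ∃ n, k = n + 2 := ⟨k - 2, by omega⟩
    have hsum := sum_range_tsub_mul_two n
    simp only [Nat.add_sub_cancel] at hsum ⊢
    rw [Nat.sub_eq_of_eq_add (show (n + 2) ^ 2 + (n + 2) = 2 * (2 * n + 1) + n * (n + 1) + 4 by
      ring), ← hsum]
    omega
  simp only [Nat.card_prod, Nat.card_fun, hc, hu, ha, Nat.card_zmod]
  rw [hexp, pow_add, pow_add, mul_pow, mul_pow, mul_pow]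
  ring

end PolyPerms

open PolyPerms in
/-- For `p` prime and `2 ≤ k ≤ p`, the number of permutations of `ℤ/p^k` induced by
polynomials is `p! · [(p-1) · p^((k²+k-4)/2)]^p`. -/
theorem stmt15 (p k : ℕ) (hp : p.Prime) (hk : 2 ≤ k) (hpk : k ≤ p) :
    Nat.card (PolyPerms (ZMod (p ^ k))) =
      p.factorial * ((p - 1) * p ^ ((k ^ 2 + k - 4) / 2)) ^ p := by
  have := Fact.mk hp
  let toPerm (d : Data p k) : PolyPerms (ZMod (p ^ k)) :=
    ⟨Equiv.ofBijective _ (Data.bijective_residueExpansion_coeff hk hpk d),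
      (exists_eval_eq_residueExpansion (by omega) d.coeff).imp fun _ hP x => (hP x).symm⟩
  have htoPerm : Function.Bijective toPerm := by
    refine ⟨fun d d' h => Data.residueExpansion_coeff_injective hk hpk
      (congrArg (⇑) (congrArg Subtype.val h)), ?_⟩
    rintro ⟨σ, P, hP⟩
    obtain ⟨d, hd⟩ := Data.exists_residueExpansion_coeff_eq hk P
      (by convert σ.bijective using 1; exact (funext hP).symm)
    exact ⟨d, Subtype.ext (Equiv.ext fun x => (congrFun hd x).trans (hP x).symm)⟩
  rw [← Nat.card_eq_of_bijective toPerm htoPerm, Data.card hk]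
end

section
/- Let p ≥ k and let d₁, …, d_{k−1} be integers with 0 ≤ d_ℓ < p^{k−ℓ}. If Σ_{ℓ=1}^{k−1} (mp)^ℓ d_ℓ ≡ 0 (mod p^k) for every integer m, then d_ℓ = 0 for all ℓ. -/
/-!
Reduced mod `p ^ k`, the polynomial `x ↦ ∑_{0 < ℓ < k} (p ^ ℓ d_ℓ) x ^ ℓ` vanishes at `x = 0, 1, …, k - 1`.
The Vandermonde determinant of these nodes is a product of differences `j - i` with
`0 < j - i < k ≤ p`, hence a unit in `ZMod (p ^ k)`, so every coefficient `p ^ ℓ d_ℓ` is divisible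
by `p ^ k`; the bound `d_ℓ < p ^ (k - ℓ)` then forces `d_ℓ = 0`.
-/

open Finset Matrix

theorem eq_zero_of_forall_sum_pow_mul_eq_zero {R : Type*} [CommRing R] {n : ℕ}
    (hunit : ∀ i : ℕ, 0 < i → i < n → IsUnit (i : R)) {w : ℕ → R}
    (h : ∀ m < n, ∑ j ∈ range n, (m : R) ^ j * w j = 0) : ∀ j < n, w j = 0 := by
  set V := vandermonde fun i : Fin n ↦ ((i : ℕ) : R)
  have hdet : IsUnit V.det := by
    rw [det_vandermonde, IsUnit.prod_univ_iff]
    refine fun i ↦ IsUnit.prod_iff.mpr fun j hj ↦ ?_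
    have hij : (i : ℕ) < j := Fin.lt_def.mp (mem_Ioi.mp hj)
    rw [← Nat.cast_sub hij.le]
    exact hunit _ (Nat.sub_pos_of_lt hij) (by omega)
  have hV : V *ᵥ (fun j : Fin n ↦ w j) = 0 := by
    ext m
    simpa [V, mulVec, dotProduct, Fin.sum_univ_eq_sum_range (fun j ↦ (m : R) ^ j * w j)]
      using h m m.isLt
  intro j hj
  exact congr_fun (eq_zero_of_det_mem_nonZeroDivisors_of_mulVec_eq_zero
    hdet.mem_nonZeroDivisors hV) ⟨j, hj⟩

theorem ZMod.isUnit_natCast_of_pos_of_lt_prime {p : ℕ} (hp : p.Prime) (k : ℕ) {i : ℕ}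
    (hi : 0 < i) (hip : i < p) : IsUnit (i : ZMod (p ^ k)) :=
  (ZMod.isUnit_iff_coprime i _).mpr <|
    (Nat.coprime_comm.mp (hp.coprime_iff_not_dvd.mpr (Nat.not_dvd_of_pos_of_lt hi hip))).pow_right k

theorem Nat.eq_zero_of_pow_dvd_pow_mul_of_lt {p k ℓ a : ℕ} (hp : p ≠ 0) (hℓ : ℓ ≤ k)
    (h : p ^ k ∣ p ^ ℓ * a) (ha : a < p ^ (k - ℓ)) : a = 0 := by
  rw [← Nat.pow_sub_mul_pow p hℓ, mul_comm] at h
  exact Nat.eq_zero_of_dvd_of_lt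
    ((Nat.mul_dvd_mul_iff_left (pow_pos (Nat.pos_of_ne_zero hp) ℓ)).mp h) ha

/-- Uniqueness lemma: if `0 ≤ d_ℓ < p^(k-ℓ)` and `Σ_{ℓ=1}^{k-1} (mp)^ℓ d_ℓ ≡ 0 (mod p^k)` for
every integer `m`, then all `d_ℓ` vanish (assuming `p ≥ k`, `p` prime). -/
theorem stmt16 (p k : ℕ) (hp : p.Prime) (hpk : k ≤ p) (d : ℕ → ℕ)
    (hd : ∀ ℓ ∈ Finset.Icc 1 (k - 1), d ℓ < p ^ (k - ℓ))
    (h : ∀ m : ℤ, (p : ℤ) ^ k ∣ ∑ ℓ ∈ Finset.Icc 1 (k - 1), (m * p) ^ ℓ * (d ℓ : ℤ)) :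
    ∀ ℓ ∈ Finset.Icc 1 (k - 1), d ℓ = 0 := by
  set d₀ : ℕ → ℕ := fun ℓ ↦ if ℓ ∈ Icc 1 (k - 1) then d ℓ else 0
  have hsum (m : ℕ) :
      ∑ ℓ ∈ range k, (m : ZMod (p ^ k)) ^ ℓ * ((p : ZMod (p ^ k)) ^ ℓ * d₀ ℓ) = 0 := by
    have hm := (ZMod.intCast_zmod_eq_zero_iff_dvd _ (p ^ k)).mpr (by push_cast; exact h m)
    have hsub : Icc 1 (k - 1) ⊆ range k := fun ℓ hℓ ↦ by simp at hℓ ⊢; omega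
    simp only [d₀, Nat.cast_ite, Nat.cast_zero, mul_ite, mul_zero, ← sum_filter,
      filter_mem_eq_inter, inter_eq_right.mpr hsub]
    push_cast at hm
    simpa [mul_pow, mul_assoc] using hm
  have hcoeff := eq_zero_of_forall_sum_pow_mul_eq_zero
    (fun i hi hik ↦ ZMod.isUnit_natCast_of_pos_of_lt_prime hp k hi (by omega)) fun m _ ↦ hsum m
  intro ℓ hℓ
  have hℓk : ℓ < k := by simp at hℓ; omega
  have hdvd : p ^ k ∣ p ^ ℓ * d ℓ := by
    have hℓ₀ := hcoeff ℓ hℓk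
    simp only [d₀, if_pos hℓ] at hℓ₀
    exact (ZMod.natCast_eq_zero_iff _ _).mp (by exact_mod_cast hℓ₀)
  exact Nat.eq_zero_of_pow_dvd_pow_mul_of_lt hp.ne_zero hℓk.le hdvd (hd ℓ hℓ)
end

section
/- Let p be a prime. Then Pgr(ℤ/p²) is isomorphic to the iterated semidirect product ((ℤ/p)^p ⋊ ((ℤ/p)^×)^p) ⋊ S_p, where (ℤ/p)^× acts on ℤ/p coordinatewise by multiplication and S_p acts on both p-fold products by permuting coordinates. In particular |Pgr(ℤ/p²)| = p! · ((p−1)p)^p. -/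
open Polynomial Finset Equiv Multiplicative

section Hermite

variable {R ι : Type*} [CommRing R] [Fintype ι] [DecidableEq ι]

noncomputable def lagrangeBasis (x : ι → R) (i : ι) : R[X] :=
  ∏ j ∈ univ.erase i, C (Ring.inverse (x i - x j)) * (X - C (x j))

theorem eval_lagrangeBasis_self {x : ι → R} (hx : Pairwise fun i j => IsUnit (x i - x j))
    (i : ι) : (lagrangeBasis x i).eval (x i) = 1 := by
  rw [lagrangeBasis, eval_prod]
  refine prod_eq_one fun j hj => ?_
  simp only [eval_mul, eval_C, eval_sub, eval_X]
  exact Ring.inverse_mul_cancel _ (hx (ne_of_mem_erase hj).symm)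

theorem eval_lagrangeBasis_of_ne (x : ι → R) {i k : ι} (h : k ≠ i) :
    (lagrangeBasis x k).eval (x i) = 0 := by
  rw [lagrangeBasis, eval_prod]
  exact prod_eq_zero (mem_erase.mpr ⟨h.symm, mem_univ i⟩) (by simp)

theorem exists_eval_eq_and_derivative_eval_eq {x : ι → R}
    (hx : Pairwise fun i j => IsUnit (x i - x j)) (v d : ι → R) :
    ∃ f : R[X], ∀ i, f.eval (x i) = v i ∧ f.derivative.eval (x i) = d i := by
  set L := lagrangeBasis x
  set c : ι → R := fun k => d k - 2 * v k * (L k).derivative.eval (x k)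
  refine ⟨∑ k, (C (v k) + C (c k) * (X - C (x k))) * L k ^ 2, fun i => ⟨?_, ?_⟩⟩
  · rw [eval_finsetSum, sum_eq_single i]
    · simp [L, eval_lagrangeBasis_self hx]
    · intro k _ hk; simp [L, eval_lagrangeBasis_of_ne x hk]
    · simp
  · rw [derivative_sum, eval_finsetSum, sum_eq_single i]
    · simp only [derivative_mul, derivative_add, derivative_C, derivative_X,
        derivative_sq, eval_add, eval_mul, eval_sub, eval_pow, eval_C, eval_X, map_sub, map_mul,
        eval_lagrangeBasis_self hx, L, c, zero_mul, mul_zero, add_zero, zero_add, sub_self,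
        sub_zero, mul_one, one_pow]
      ring
    · intro k _ hk; simp [L, derivative_sq, eval_lagrangeBasis_of_ne x hk]
    · simp

end Hermite

section AffineWreathProduct

variable (ι R : Type*) [Ring R]

def unitsMulAut : (ι → Rˣ) →* MulAut (Multiplicative (ι → R)) :=
  (MulAutMultiplicative (ι → R)).symm.toMonoidHom.comp (DistribMulAction.toAddAut _ _)

abbrev AffinePi := Multiplicative (ι → R) ⋊[unitsMulAut ι R] (ι → Rˣ)

def permMulAut : Perm ι →* MulAut (AffinePi ι R) where
  toFun σ := SemidirectProduct.congr
    (AddEquiv.toMultiplicative (AddEquiv.arrowCongr σ (AddEquiv.refl R)))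
    (MulEquiv.arrowCongr σ (MulEquiv.refl Rˣ)) fun _ => MulEquiv.ext fun _ => rfl
  map_one' := rfl
  map_mul' _ _ := rfl

@[simp]
theorem unitsMulAut_apply (u : ι → Rˣ) (a : Multiplicative (ι → R)) :
    unitsMulAut ι R u a = ofAdd fun i => (u i : R) * toAdd a i :=
  rfl

@[simp]
theorem permMulAut_apply_left (σ : Perm ι) (x : AffinePi ι R) :
    (permMulAut ι R σ x).left = ofAdd fun i => toAdd x.left (σ⁻¹ i) :=
  rfl

@[simp]
theorem permMulAut_apply_right (σ : Perm ι) (x : AffinePi ι R) :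
    (permMulAut ι R σ x).right = fun i => x.right (σ⁻¹ i) :=
  rfl

abbrev AffineWreath := AffinePi ι R ⋊[permMulAut ι R] Perm ι

namespace AffineWreath

variable {ι R}

instance : MulAction (AffineWreath ι R) (ι × R) where
  smul x y := (x.right y.1,
    (x.left.right (x.right y.1) : R) * y.2 + toAdd x.left.left (x.right y.1))
  one_smul _ := by simp [HSMul.hSMul]
  mul_smul x y z := by
    simp only [HSMul.hSMul, SemidirectProduct.mul_right, SemidirectProduct.mul_left, Perm.coe_mul,
      Function.comp_apply, permMulAut_apply_left, permMulAut_apply_right, Perm.coe_inv,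
      symm_apply_apply, Pi.mul_apply, Units.val_mul, unitsMulAut_apply, toAdd_ofAdd, toAdd_mul,
      Pi.add_apply, mul_add, mul_assoc, Prod.mk.injEq, true_and]
    abel

theorem smul_mk (x : AffineWreath ι R) (r : ι) (m : R) :
    x • (r, m) =
      (x.right r, (x.left.right (x.right r) : R) * m + toAdd x.left.left (x.right r)) :=
  rfl

instance : FaithfulSMul (AffineWreath ι R) (ι × R) where
  eq_of_smul_eq_smul {x y} h := by
    have hright : x.right = y.right := Equiv.ext fun r => congrArg Prod.fst (h (r, 0))
    have hleft (r : ι) (m : R) :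
        (x.left.right (x.right r) : R) * m + toAdd x.left.left (x.right r) =
          (y.left.right (x.right r) : R) * m + toAdd y.left.left (x.right r) := by
      simpa [smul_mk, hright] using congrArg Prod.snd (h (r, m))
    have ha (t : ι) : toAdd x.left.left t = toAdd y.left.left t := by
      simpa using hleft (x.right⁻¹ t) 0
    have hu (t : ι) : x.left.right t = y.left.right t := by
      simpa [ha, Units.ext_iff] using hleft (x.right⁻¹ t) 1
    exact SemidirectProduct.ext (SemidirectProduct.ext (funext ha) (funext hu)) hright

theorem mem_range_toPermHom {K : Type*} [Field K] [Finite ι] {g : Perm (ι × K)}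
    (s : ι → ι) (c a : ι → K) (hg : ∀ r m, g (r, m) = (s r, c r * m + a r)) :
    g ∈ (MulAction.toPermHom (AffineWreath ι K) (ι × K)).range := by
  have hs : s.Surjective := fun t => ⟨(g.symm (t, 0)).1, by
    simpa [hg] using congrArg Prod.fst (g.apply_symm_apply (t, 0))⟩
  have hc (r : ι) : c r ≠ 0 := fun h0 => by
    simpa using g.injective (a₁ := (r, 0)) (a₂ := (r, 1)) (by simp [hg, h0])
  let σ := Equiv.ofBijective s ⟨Finite.injective_iff_surjective.mpr hs, hs⟩
  refine ⟨⟨⟨ofAdd (a ∘ σ.symm), fun t => Units.mk0 (c (σ.symm t)) (hc _)⟩, σ⟩, ?_⟩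
  have hσ (r : ι) : σ r = s r := rfl
  have hσ_symm (r : ι) : σ.symm (s r) = r := σ.symm_apply_apply r
  ext ⟨r, m⟩ <;> simp [smul_mk, hg, hσ, hσ_symm]

theorem card [Finite ι] :
    Nat.card (AffineWreath ι R) =
      (Nat.card ι).factorial * (Nat.card Rˣ * Nat.card R) ^ Nat.card ι := by
  simp only [SemidirectProduct.card, Nat.card_congr Multiplicative.toAdd, Nat.card_fun,
    Nat.card_perm, mul_pow]
  ring

end AffineWreath

end AffineWreathProduct

section TimesModulus

variable (n : ℕ)

abbrev reduceMod : ZMod (n ^ 2) →+* ZMod n := ZMod.castHom (dvd_pow_self n two_ne_zero) _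

/-- `m ↦ n * m'` for any lift `m'` of `m`, well defined because `n * n = 0` in `ZMod (n ^ 2)`. -/
def timesModulus : ZMod n →+ ZMod (n ^ 2) :=
  ZMod.lift n ⟨(AddMonoidHom.mulLeft (n : ZMod (n ^ 2))).comp (Int.castAddHom _), by
    simp [← sq, ← Nat.cast_pow]⟩

variable {n}

theorem timesModulus_intCast (k : ℤ) : timesModulus n k = n * k :=
  ZMod.lift_coe _ _ _

theorem timesModulus_natCast (k : ℕ) : timesModulus n k = n * k := by
  simpa using timesModulus_intCast (k : ℤ)

theorem mul_timesModulus (z : ZMod (n ^ 2)) (m : ZMod n) :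
    z * timesModulus n m = timesModulus n (reduceMod n z * m) := by
  obtain ⟨j, rfl⟩ := ZMod.intCast_surjective z
  obtain ⟨k, rfl⟩ := ZMod.intCast_surjective m
  simp only [map_intCast, ← Int.cast_mul, timesModulus_intCast]
  push_cast
  ring

theorem timesModulus_sq (m : ZMod n) : timesModulus n m ^ 2 = 0 := by
  obtain ⟨k, rfl⟩ := ZMod.intCast_surjective m
  rw [timesModulus_intCast, mul_pow, ← Nat.cast_pow, ZMod.natCast_self, zero_mul]

theorem eval_add_timesModulus (f : (ZMod (n ^ 2))[X]) (y : ZMod (n ^ 2)) (m : ZMod n) :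
    f.eval (y + timesModulus n m) =
      f.eval y + timesModulus n (reduceMod n (f.derivative.eval y) * m) := by
  rw [eval_add_of_sq_eq_zero _ _ _ (timesModulus_sq m), mul_timesModulus]

variable (n) [NeZero n]

noncomputable def digitEquiv : Fin n × ZMod n ≃ ZMod (n ^ 2) :=
  Equiv.ofBijective (fun rm => (rm.1 : ℕ) + timesModulus n rm.2) <| by
    rw [Fintype.bijective_iff_surjective_and_card]
    refine ⟨fun x => ⟨(⟨x.val % n, Nat.mod_lt _ (NeZero.pos n)⟩, (x.val / n : ℕ)), ?_⟩,
      by simp [sq]⟩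
    dsimp only
    rw [timesModulus_natCast, ← Nat.cast_mul, ← Nat.cast_add, Nat.mod_add_div,
      ZMod.natCast_zmod_val]

variable {n}

theorem digitEquiv_apply (r : Fin n) (m : ZMod n) :
    digitEquiv n (r, m) = (r : ℕ) + timesModulus n m :=
  rfl

end TimesModulus

theorem isUnit_natCast_fin_sub {p : ℕ} [hp : Fact p.Prime] {i j : Fin p} (h : i ≠ j) :
    IsUnit (((i : ℕ) : ZMod (p ^ 2)) - (j : ℕ)) := by
  wlog hij : j < i generalizing i j
  · simpa using (this h.symm (lt_of_le_of_ne (not_lt.mp hij) h)).neg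
  rw [← Nat.cast_sub hij.le, ZMod.isUnit_natCast_iff_not_dvd_pow hp.out two_pos]
  intro hdvd
  have := Nat.le_of_dvd (Nat.sub_pos_of_lt hij) hdvd
  omega

section PolynomialPermutations

variable {n : ℕ} [NeZero n]

theorem eval_digitEquiv_of_eval_eq {f : (ZMod (n ^ 2))[X]} {r : Fin n} {q : Fin n × ZMod n}
    (h : f.eval ((r : ℕ) : ZMod (n ^ 2)) = digitEquiv n q) (m : ZMod n) :
    f.eval (digitEquiv n (r, m)) =
      digitEquiv n (q.1, reduceMod n (f.derivative.eval ((r : ℕ) : ZMod (n ^ 2))) * m + q.2) := by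
  rw [digitEquiv_apply, eval_add_timesModulus, h, digitEquiv_apply, digitEquiv_apply, map_add]
  abel

variable (n) in
noncomputable def affineWreathToPerm : AffineWreath (Fin n) (ZMod n) →* Perm (ZMod (n ^ 2)) :=
  (digitEquiv n).permCongrHom.toMonoidHom.comp (MulAction.toPermHom _ _)

theorem affineWreathToPerm_injective : Function.Injective (affineWreathToPerm n) :=
  (digitEquiv n).permCongrHom.injective.comp MulAction.toPerm_injective

theorem affineWreathToPerm_apply_digitEquiv (x : AffineWreath (Fin n) (ZMod n)) (r : Fin n)
    (m : ZMod n) : affineWreathToPerm n x (digitEquiv n (r, m)) = digitEquiv n (x • (r, m)) := by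
  simp [affineWreathToPerm, Equiv.permCongrHom, Equiv.permCongr_apply]

theorem coe_range_affineWreathToPerm {p : ℕ} [Fact p.Prime] :
    ((affineWreathToPerm p).range : Set (Perm (ZMod (p ^ 2)))) = PolyPerms (ZMod (p ^ 2)) := by
  apply Set.Subset.antisymm
  · rintro _ ⟨x, rfl⟩
    obtain ⟨f, hf⟩ := exists_eval_eq_and_derivative_eval_eq
      (x := fun i : Fin p => ((i : ℕ) : ZMod (p ^ 2))) (fun _ _ => isUnit_natCast_fin_sub)
      (fun i => digitEquiv p (x • (i, 0)))
      (fun i => ((x.left.right (x.right i) : ZMod p).val : ZMod (p ^ 2)))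
    refine ⟨f, fun y => ?_⟩
    obtain ⟨⟨r, m⟩, rfl⟩ := (digitEquiv p).surjective y
    rw [affineWreathToPerm_apply_digitEquiv, eval_digitEquiv_of_eval_eq (hf r).1, (hf r).2]
    simp [AffineWreath.smul_mk]
  · rintro F ⟨f, hF⟩
    let e := digitEquiv p
    let q (r : Fin p) := e.symm (f.eval ((r : ℕ) : ZMod (p ^ 2)))
    obtain ⟨x, hx⟩ := AffineWreath.mem_range_toPermHom (g := e.symm.permCongr F)
      (fun r => (q r).1) (fun r => reduceMod p (f.derivative.eval ((r : ℕ) : ZMod (p ^ 2))))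
      (fun r => (q r).2) fun r m => by
        rw [Equiv.permCongr_apply, Equiv.symm_symm, hF,
          eval_digitEquiv_of_eval_eq (e.apply_symm_apply _).symm, Equiv.symm_apply_apply]
    refine ⟨x, Equiv.ext fun y => ?_⟩
    simp [affineWreathToPerm, hx, e]

end PolynomialPermutations

theorem pgr_eq_range_affineWreathToPerm (p : ℕ) [Fact p.Prime] :
    Pgr (ZMod (p ^ 2)) = (affineWreathToPerm p).range := by
  rw [Pgr, ← coe_range_affineWreathToPerm, Subgroup.closure_eq]

/-- `Pgr (ℤ/p²) ≅ ((ℤ/p)^p ⋊ ((ℤ/p)ˣ)^p) ⋊ S_p`, where the units act coordinatewise by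
multiplication and `S_p` permutes coordinates; in particular
`|Pgr (ℤ/p²)| = p!·((p-1)p)^p`. -/
theorem stmt18 (p : ℕ) [Fact p.Prime] :
    ∃ (φ : (Fin p → (ZMod p)ˣ) →* MulAut (Multiplicative (Fin p → ZMod p)))
      (ψ : Equiv.Perm (Fin p) →*
        MulAut (SemidirectProduct (Multiplicative (Fin p → ZMod p)) (Fin p → (ZMod p)ˣ) φ)),
      (∀ (u : Fin p → (ZMod p)ˣ) (a : Fin p → ZMod p),
        φ u (Multiplicative.ofAdd a) = Multiplicative.ofAdd fun i => (u i : ZMod p) * a i) ∧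
      (∀ (σ : Equiv.Perm (Fin p))
          (x : SemidirectProduct (Multiplicative (Fin p → ZMod p)) (Fin p → (ZMod p)ˣ) φ),
        (ψ σ x).left = Multiplicative.ofAdd (fun i => Multiplicative.toAdd x.left (σ⁻¹ i)) ∧
        (ψ σ x).right = fun i => x.right (σ⁻¹ i)) ∧
      Nonempty (Pgr (ZMod (p ^ 2)) ≃*
        SemidirectProduct
          (SemidirectProduct (Multiplicative (Fin p → ZMod p)) (Fin p → (ZMod p)ˣ) φ)
          (Equiv.Perm (Fin p)) ψ) ∧
      Nat.card (Pgr (ZMod (p ^ 2))) = p.factorial * ((p - 1) * p) ^ p := by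
  let e : AffineWreath (Fin p) (ZMod p) ≃* Pgr (ZMod (p ^ 2)) :=
    (MonoidHom.ofInjective affineWreathToPerm_injective).trans
      (MulEquiv.subgroupCongr (pgr_eq_range_affineWreathToPerm p).symm)
  refine ⟨unitsMulAut _ _, permMulAut _ _, unitsMulAut_apply _ _,
    fun σ x => ⟨permMulAut_apply_left _ _ σ x, permMulAut_apply_right _ _ σ x⟩,
    ⟨e.symm⟩, ?_⟩
  rw [← Nat.card_congr e.toEquiv, AffineWreath.card]
  simp [Nat.card_eq_fintype_card, Nat.totient_prime Fact.out]
end
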